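/- Suppose h has a fixed point x* ∈ D_B, and let (x^k)_{k≥0} be any modified Jacobi-type iteration sequence: each x^k lies in D_B, and for every k ≥ 0 and every (i,j) ∈ S_B, the block X^{k+1}_{ij} of x^{k+1} equals H_{ij}(x^k) whenever either i ≠ j, or i = j and H_{jj}(x^k) is invertible (when i = j and H_{jj}(x^k) is singular, X^{k+1}_{jj} is an arbitrary invertible matrix). Then x^k = x* for all k ≥ |S_B|; that is, the modified Jacobi-type iteration converges in at most |S_B| = m/b² iterations from any initial guess x⁰ ∈ D_B. -/

import Mathlib

open Filter Topology

/-- The state space of block unknowns: one `b × b` block for each index pair in `S`. -/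
abbrev BlockVec (b N : ℕ) (S : Finset (Fin N × Fin N)) : Type :=
  {p : Fin N × Fin N // p ∈ S} → Fin b → Fin b → ℝ

/-- The block `X_{ij}` of the family `x`, with the convention `X_{ij} = 0` for
`(i,j) ∉ S`. -/
def Xf {b N : ℕ} (S : Finset (Fin N × Fin N)) (x : BlockVec b N S) (i j : Fin N) :
    Matrix (Fin b) (Fin b) ℝ :=
  if h : (i, j) ∈ S then Matrix.of (x ⟨(i, j), h⟩) else 0

/-- The block `H_{ij}(x)` of the block-ILU fixed point map: for `i > j` it is
`(A_{ij} - ∑_{k<j} X_{ik} X_{kj}) X_{jj}⁻¹`, and for `i ≤ j` it is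
`A_{ij} - ∑_{k<i} X_{ik} X_{kj}`. -/
noncomputable def Hmap {b N : ℕ} (S : Finset (Fin N × Fin N))
    (A : Fin N → Fin N → Matrix (Fin b) (Fin b) ℝ) (x : BlockVec b N S) (i j : Fin N) :
    Matrix (Fin b) (Fin b) ℝ :=
  if j < i then
    (A i j - ∑ k ∈ Finset.univ.filter (fun k : Fin N => k < j),
        Xf S x i k * Xf S x k j) * (Xf S x j j)⁻¹
  else
    A i j - ∑ k ∈ Finset.univ.filter (fun k : Fin N => k < i), Xf S x i k * Xf S x k j

/-- The block-ILU fixed point map `h`. -/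
noncomputable def hFun {b N : ℕ} (S : Finset (Fin N × Fin N))
    (A : Fin N → Fin N → Matrix (Fin b) (Fin b) ℝ) :
    BlockVec b N S → BlockVec b N S :=
  fun x p k l => Hmap S A x p.1.1 p.1.2 k l

/-- The domain of definition `D_B`: all diagonal blocks invertible. -/
def DB (b N : ℕ) (S : Finset (Fin N × Fin N)) : Set (BlockVec b N S) :=
  {x | ∀ j : Fin N, IsUnit (Xf S x j j)}

/-!
Order the block positions by the level `2j` for `(j,j)` and `2·min i j + 1` for `(i,j)`,
`i ≠ j`. The block `H_{ij}(x)` only reads blocks of `x` of strictly lower level, so once the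
iterate agrees with `x*` below some level, one more sweep makes it agree at that level too: the
computed diagonal blocks then equal the invertible blocks of `x*`, so the modification never
fires. A position with `n` positions strictly below it is therefore correct from step `n + 1`
on, and `n < |S_B|`.
-/

open Finset

theorem eq_of_card_le_of_agree_below {ι α β : Type*} [Fintype ι] [Preorder α] (r : ι → α)
    {x : ℕ → ι → β} {y : ι → β}
    (hstep : ∀ k p, (∀ q, r q < r p → x k q = y q) → x (k + 1) p = y p) :
    ∀ k, Fintype.card ι ≤ k → x k = y := by
  classical
  let below : ι → ℕ := fun p => #{q | r q < r p}
  have below_lt_card p : below p < Fintype.card ι :=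
    card_lt_univ_of_notMem (x := p) (by simp)
  have below_strictMono p q (hqp : r q < r p) : below q < below p :=
    card_lt_card <| (ssubset_iff_of_subset fun s hs => by
      simp only [mem_filter, mem_univ, true_and] at hs ⊢
      exact hs.trans hqp).2 ⟨q, by simpa using hqp, by simp⟩
  have agree k : ∀ p, below p < k → x k p = y p := by
    induction k with
    | zero => intro p h; omega
    | succ k ih =>
      intro p hp
      exact hstep k p fun q hqp => ih q (by have := below_strictMono p q hqp; omega)
  intro k hk
  funext p
  exact agree k p ((below_lt_card p).trans_le hk)

def blockLevel {N : ℕ} (p : Fin N × Fin N) : ℕ :=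
  if p.1 = p.2 then 2 * p.1.val else 2 * min p.1.val p.2.val + 1

section BlockILU

variable {b N : ℕ} {S : Finset (Fin N × Fin N)}

theorem blockLevel_left_lt {i j k : Fin N} (hki : k < i) (hkj : k < j) :
    blockLevel (i, k) < blockLevel (i, j) := by
  simp only [blockLevel, Fin.ext_iff, Fin.lt_def] at *
  split_ifs <;> omega

theorem blockLevel_right_lt {i j k : Fin N} (hki : k < i) (hkj : k < j) :
    blockLevel (k, j) < blockLevel (i, j) := by
  simp only [blockLevel, Fin.ext_iff, Fin.lt_def] at *
  split_ifs <;> omega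

theorem blockLevel_diag_lt {i j : Fin N} (hji : j < i) :
    blockLevel (j, j) < blockLevel (i, j) := by
  simp only [blockLevel, Fin.ext_iff, Fin.lt_def] at *
  split_ifs <;> omega

theorem Xf_congr {x y : BlockVec b N S} {i j : Fin N}
    (h : ∀ hij : (i, j) ∈ S, x ⟨(i, j), hij⟩ = y ⟨(i, j), hij⟩) :
    Xf S x i j = Xf S y i j := by
  unfold Xf
  split_ifs with hij
  · rw [h hij]
  · rfl

theorem Hmap_congr (A : Fin N → Fin N → Matrix (Fin b) (Fin b) ℝ) {x y : BlockVec b N S}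
    {i j : Fin N}
    (hxy : ∀ i' j', blockLevel (i', j') < blockLevel (i, j) → Xf S x i' j' = Xf S y i' j') :
    Hmap S A x i j = Hmap S A y i j := by
  have hsum {m : Fin N} (hmi : m ≤ i) (hmj : m ≤ j) :
      ∑ k ∈ univ.filter (· < m), Xf S x i k * Xf S x k j =
        ∑ k ∈ univ.filter (· < m), Xf S y i k * Xf S y k j := by
    refine sum_congr rfl fun k hk => ?_
    have hkm : k < m := (mem_filter.1 hk).2
    rw [hxy i k (blockLevel_left_lt (hkm.trans_le hmi) (hkm.trans_le hmj)),
      hxy k j (blockLevel_right_lt (hkm.trans_le hmi) (hkm.trans_le hmj))]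
  unfold Hmap
  split_ifs with hji
  · rw [hsum hji.le le_rfl, hxy j j (blockLevel_diag_lt hji)]
  · rw [hsum le_rfl (not_lt.1 hji)]

theorem Hmap_eq_of_hFun_eq_self {A : Fin N → Fin N → Matrix (Fin b) (Fin b) ℝ}
    {x : BlockVec b N S} (hfix : hFun S A x = x) (p : {p : Fin N × Fin N // p ∈ S}) :
    Hmap S A x p.1.1 p.1.2 = Matrix.of (x p) := by
  ext a c
  exact congrFun (congrFun (congrFun hfix p) a) c

theorem isUnit_of_mem_DB_of_diag {x : BlockVec b N S} (hx : x ∈ DB b N S)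
    {p : {p : Fin N × Fin N // p ∈ S}} (hp : p.1.1 = p.1.2) : IsUnit (Matrix.of (x p)) := by
  obtain ⟨⟨i, j⟩, hij⟩ := p
  obtain rfl : i = j := hp
  simpa only [Xf, dif_pos hij] using hx i

end BlockILU

theorem modified_jacobi_blockILU_converges_general
    {b N : ℕ} (S : Finset (Fin N × Fin N))
    (A : Fin N → Fin N → Matrix (Fin b) (Fin b) ℝ)
    (xstar : BlockVec b N S) (hxstar : xstar ∈ DB b N S)
    (hfix : hFun S A xstar = xstar)
    (x : ℕ → BlockVec b N S)
    (hupd : ∀ (k : ℕ) (p : {p : Fin N × Fin N // p ∈ S}),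
      (p.1.1 ≠ p.1.2 ∨ IsUnit (Hmap S A (x k) p.1.1 p.1.2)) →
      ∀ a c : Fin b, x (k + 1) p a c = Hmap S A (x k) p.1.1 p.1.2 a c) :
    ∀ k : ℕ, S.card ≤ k → x k = xstar := by
  intro k hk
  refine eq_of_card_le_of_agree_below (fun p : {p // p ∈ S} => blockLevel p.1)
    (fun n p hbelow => ?_) k ((Fintype.card_coe S).trans_le hk)
  have hH : Hmap S A (x n) p.1.1 p.1.2 = Matrix.of (xstar p) := by
    rw [Hmap_congr A fun i' j' hlt => Xf_congr fun hij => hbelow ⟨(i', j'), hij⟩ hlt,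
      Hmap_eq_of_hFun_eq_self hfix]
  have hcond : p.1.1 ≠ p.1.2 ∨ IsUnit (Hmap S A (x n) p.1.1 p.1.2) := by
    rw [hH]
    exact (em' _).imp_right (isUnit_of_mem_DB_of_diag hxstar)
  funext a c
  rw [hupd n p hcond a c, hH]
  rfl

/-- If `h` has a fixed point `x* ∈ D_B`, then any modified Jacobi-type iteration
(where each iterate lies in `D_B`, every block is replaced by the corresponding block of
`h` except that a diagonal block is replaced by an arbitrary invertible matrix whenever
the computed value would be singular) satisfies `x^k = x*` for all `k ≥ |S_B|`. -/
theorem modified_jacobi_blockILU_converges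
    {b N : ℕ} (hb : 1 ≤ b) (hN : 1 ≤ N) (S : Finset (Fin N × Fin N))
    (hS : ∀ j : Fin N, (j, j) ∈ S)
    (A : Fin N → Fin N → Matrix (Fin b) (Fin b) ℝ)
    (xstar : BlockVec b N S) (hxstar : xstar ∈ DB b N S)
    (hfix : hFun S A xstar = xstar)
    (x : ℕ → BlockVec b N S)
    (hmem : ∀ k : ℕ, x k ∈ DB b N S)
    (hupd : ∀ (k : ℕ) (p : {p : Fin N × Fin N // p ∈ S}),
      (p.1.1 ≠ p.1.2 ∨ IsUnit (Hmap S A (x k) p.1.1 p.1.2)) →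
      ∀ a c : Fin b, x (k + 1) p a c = Hmap S A (x k) p.1.1 p.1.2 a c) :
    ∀ k : ℕ, S.card ≤ k → x k = xstar :=
  modified_jacobi_blockILU_converges_general S A xstar hxstar hfix x hupd
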